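/- Define c_j ∈ F_n by c_j = a_2^{j/2} if j is even and c_j = a_1 a_2^{(j-1)/2} if j is odd, and g_j = (−1)^{j+1} c_j ∈ ℤF_n. Then for every positive integer m, under the Artin action g_m^{β(m)} = − g_{m-1}^{β(m)} a_3 a_2^{-1}, where β(m) = σ_1^m ρ ∈ B_n. -/

import Mathlib

namespace Artin

/-- `A j` is the generator `a_j = ξ_1⋯ξ_j` of the free group `F_n` (with `A 0 = 1`). -/
def A (j : ℕ) : FreeGroup ℕ := if j = 0 then 1 else FreeGroup.of j

/-- The effect of the Artin generator `σ_i` on the generators `a_j`. -/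
def fwd (i : ℕ) : ℕ → FreeGroup ℕ := fun j =>
  if 1 ≤ i ∧ j = i then A (i + 1) * (A i)⁻¹ * A (i - 1) else FreeGroup.of j

/-- The effect of `σ_i⁻¹` on the generators `a_j`. -/
def bwd (i : ℕ) : ℕ → FreeGroup ℕ := fun j =>
  if 1 ≤ i ∧ j = i then A (i - 1) * (A i)⁻¹ * A (i + 1) else FreeGroup.of j

lemma lift_fwd_A (i k : ℕ) (h : k ≠ i) : FreeGroup.lift (fwd i) (A k) = A k := by
  by_cases hk : k = 0
  · simp [A, hk]
  · simp only [A, if_neg hk, FreeGroup.lift_apply_of, fwd]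
    rw [if_neg]
    rintro ⟨-, rfl⟩; exact h rfl

lemma lift_bwd_A (i k : ℕ) (h : k ≠ i) : FreeGroup.lift (bwd i) (A k) = A k := by
  by_cases hk : k = 0
  · simp [A, hk]
  · simp only [A, if_neg hk, FreeGroup.lift_apply_of, bwd]
    rw [if_neg]
    rintro ⟨-, rfl⟩; exact h rfl

lemma comp_bwd_fwd (i : ℕ) :
    (FreeGroup.lift (bwd i)).comp (FreeGroup.lift (fwd i)) = MonoidHom.id _ := by
  apply FreeGroup.ext_hom
  intro j
  simp only [MonoidHom.comp_apply, FreeGroup.lift_apply_of, MonoidHom.id_apply]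
  unfold fwd
  by_cases h : 1 ≤ i ∧ j = i
  · obtain ⟨hi, hji⟩ := h
    subst hji
    rw [if_pos ⟨hi, rfl⟩]
    have hj : A j = FreeGroup.of j := by simp only [A, if_neg (by omega : ¬ j = 0)]
    rw [map_mul, map_mul, map_inv]
    rw [lift_bwd_A j (j + 1) (by omega), lift_bwd_A j (j - 1) (by omega)]
    rw [← hj]
    have hAj : FreeGroup.lift (bwd j) (A j) = A (j - 1) * (A j)⁻¹ * A (j + 1) := by
      rw [hj, FreeGroup.lift_apply_of, bwd, if_pos ⟨hi, rfl⟩, hj]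
    rw [hAj]
    group
  · rw [if_neg h]
    simp only [FreeGroup.lift_apply_of, bwd]
    rw [if_neg h]

lemma comp_fwd_bwd (i : ℕ) :
    (FreeGroup.lift (fwd i)).comp (FreeGroup.lift (bwd i)) = MonoidHom.id _ := by
  apply FreeGroup.ext_hom
  intro j
  simp only [MonoidHom.comp_apply, FreeGroup.lift_apply_of, MonoidHom.id_apply]
  unfold bwd
  by_cases h : 1 ≤ i ∧ j = i
  · obtain ⟨hi, hji⟩ := h
    subst hji
    rw [if_pos ⟨hi, rfl⟩]
    have hj : A j = FreeGroup.of j := by simp only [A, if_neg (by omega : ¬ j = 0)]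
    rw [map_mul, map_mul, map_inv]
    rw [lift_fwd_A j (j + 1) (by omega), lift_fwd_A j (j - 1) (by omega)]
    rw [← hj]
    have hAj : FreeGroup.lift (fwd j) (A j) = A (j + 1) * (A j)⁻¹ * A (j - 1) := by
      rw [hj, FreeGroup.lift_apply_of, fwd, if_pos ⟨hi, rfl⟩, hj]
    rw [hAj]
    group
  · rw [if_neg h]
    simp only [FreeGroup.lift_apply_of, fwd]
    rw [if_neg h]

/-- The automorphism of `F_n` given by the Artin generator `σ_i`. -/
def gen (i : ℕ) : MulAut (FreeGroup ℕ) where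
  toFun := FreeGroup.lift (fwd i)
  invFun := FreeGroup.lift (bwd i)
  left_inv x := by
    have := DFunLike.congr_fun (comp_bwd_fwd i) x
    simpa using this
  right_inv x := by
    have := DFunLike.congr_fun (comp_fwd_bwd i) x
    simpa using this
  map_mul' := map_mul _

/-- The Artin representation, as a homomorphism from words in the braid generators
(`FreeGroup ℕ`, letter `i` standing for `σ_i`) to the opposite of `Aut(F_n)`;
the opposite group is used so that `w^{βγ} = (w^β)^γ`. -/
def rep : FreeGroup ℕ →* (MulAut (FreeGroup ℕ))ᵐᵒᵖ :=
  FreeGroup.lift (fun i => MulOpposite.op (gen i))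

/-- The (right) Artin action: `act b w = w^b`. -/
def act (b w : FreeGroup ℕ) : FreeGroup ℕ := (rep b).unop w


/-- The word `ρ = σ_{n-1} ⋯ σ_2 σ_1` in the braid generators. -/
def ρw (n : ℕ) : FreeGroup ℕ :=
  (((List.range (n - 1)).map (fun k => FreeGroup.of (k + 1))).reverse).prod

/-- The word `δ = σ_1 σ_2 ⋯ σ_{n-1}` in the braid generators. -/
def δw (n : ℕ) : FreeGroup ℕ :=
  ((List.range (n - 1)).map (fun k => FreeGroup.of (k + 1))).prod

/-- The full-twist word `θ = (σ_1 ⋯ σ_{n-1})^n`. -/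
def θw (n : ℕ) : FreeGroup ℕ := δw n ^ n

/-- The word `β(m) = σ_1^m ρ`. -/
def βw (n m : ℕ) : FreeGroup ℕ := FreeGroup.of 1 ^ m * ρw n

/-- The integral group ring `ℤ F_n`. -/
abbrev GR := MonoidAlgebra ℤ (FreeGroup ℕ)

/-- The inclusion of `F_n` into the group ring `ℤ F_n`. -/
noncomputable def sg (w : FreeGroup ℕ) : GR := MonoidAlgebra.of ℤ (FreeGroup ℕ) w

/-- The element `c_j ∈ F_n`: `c_j = a_2^{j/2}` for `j` even, `c_j = a_1 a_2^{(j-1)/2}` for `j` odd. -/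
def c (j : ℕ) : FreeGroup ℕ :=
  if Even j then A 2 ^ (j / 2) else A 1 * A 2 ^ ((j - 1) / 2)

/-- The element `g_j = (−1)^{j+1} c_j ∈ ℤ F_n`. -/
noncomputable def g (j : ℕ) : GR := ((-1 : ℤ) ^ (j + 1)) • sg (c j)

/-- The `ℤ`-linear (ring) extension of the Artin action of a braid word to `ℤ F_n`. -/
noncomputable def actR (b : FreeGroup ℕ) : GR →+* GR :=
  MonoidAlgebra.mapDomainRingHom ℤ ((rep b).unop : FreeGroup ℕ ≃* FreeGroup ℕ).toMonoidHom

/-!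
Since `g_j = (-1)^{j+1} c_j`, the claim is the free-group identity `(c_{m-1}⁻¹ c_m)^{β(m)} = a_3 a_2⁻¹`.
`σ_1` fixes `a_2` and sends `a_1 ↦ a_2 a_1⁻¹`, and a direct computation shows that it maps
`c_j⁻¹ c_{j+1}` to `c_{j-1}⁻¹ c_j` for `j ≥ 1`; hence `σ_1^m` maps `c_{m-1}⁻¹ c_m` to `a_1^{σ_1} = a_2 a_1⁻¹`.
Finally `ρ = σ_{n-1} ⋯ σ_1` sends `a_j ↦ a_{j+1} a_1⁻¹` for `j < n`, so `a_2 a_1⁻¹ ↦ a_3 a_2⁻¹`.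
-/

lemma A_zero : A 0 = 1 := rfl

lemma act_mul (b₁ b₂ w : FreeGroup ℕ) : act (b₁ * b₂) w = act b₂ (act b₁ w) := by
  simp [act]

lemma act_apply_mul (b x y : FreeGroup ℕ) : act b (x * y) = act b x * act b y :=
  map_mul (rep b).unop x y

lemma act_apply_inv (b x : FreeGroup ℕ) : act b x⁻¹ = (act b x)⁻¹ :=
  map_inv (rep b).unop x

lemma act_apply_pow (b x : FreeGroup ℕ) (k : ℕ) : act b (x ^ k) = act b x ^ k :=
  map_pow (rep b).unop x k

lemma act_of_A_of_ne {i j : ℕ} (h : j ≠ i) : act (FreeGroup.of i) (A j) = A j := by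
  simpa [act, rep, gen] using lift_fwd_A i j h

lemma act_of_A_self {i : ℕ} (hi : 1 ≤ i) :
    act (FreeGroup.of i) (A i) = A (i + 1) * (A i)⁻¹ * A (i - 1) := by
  have hA : A i = FreeGroup.of i := if_neg (by omega)
  simp only [act, rep, gen, FreeGroup.lift_apply_of, MulOpposite.unop_op, MulEquiv.coe_mk,
    Equiv.coe_fn_mk, hA]
  rw [fwd, if_pos ⟨hi, rfl⟩, hA]

lemma act_of_one_A_one : act (FreeGroup.of 1) (A 1) = A 2 * (A 1)⁻¹ := by
  rw [act_of_A_self le_rfl, Nat.sub_self, A_zero, mul_one]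

lemma ρw_succ_succ (k : ℕ) : ρw (k + 2) = FreeGroup.of (k + 1) * ρw (k + 1) := by
  simp [ρw, List.range_succ]

lemma act_ρw_A_of_le {n j : ℕ} (h : n ≤ j) : act (ρw n) (A j) = A j := by
  induction n with
  | zero => rfl
  | succ n ih =>
    cases n with
    | zero => rfl
    | succ n => rw [ρw_succ_succ, act_mul, act_of_A_of_ne (by omega), ih (by omega)]

lemma act_ρw_A {n j : ℕ} (hj : j < n) : act (ρw n) (A j) = A (j + 1) * (A 1)⁻¹ := by
  obtain ⟨k, rfl⟩ : ∃ k, n = k + 1 := ⟨n - 1, by omega⟩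
  induction k generalizing j with
  | zero =>
    obtain rfl : j = 0 := by omega
    exact (mul_inv_cancel (A 1)).symm
  | succ k ih =>
    rw [ρw_succ_succ, act_mul]
    rcases Nat.lt_succ_iff_lt_or_eq.mp hj with hj | rfl
    · rw [act_of_A_of_ne (by omega), ih hj]
    · rw [act_of_A_self (by omega), act_apply_mul, act_apply_mul, act_apply_inv,
        act_ρw_A_of_le (by omega), act_ρw_A_of_le (j := k + 1) le_rfl, Nat.add_sub_cancel,
        ih (by omega)]
      group

lemma c_two_mul (k : ℕ) : c (2 * k) = A 2 ^ k := by
  rw [c, if_pos (even_two_mul k), Nat.mul_div_cancel_left k two_pos]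

lemma c_two_mul_add_one (k : ℕ) : c (2 * k + 1) = A 1 * A 2 ^ k := by
  rw [c, if_neg (Nat.not_even_two_mul_add_one k), Nat.add_sub_cancel,
    Nat.mul_div_cancel_left k two_pos]

def cStep (j : ℕ) : FreeGroup ℕ := (c (j - 1))⁻¹ * c j

lemma c_mul_cStep (j : ℕ) : c (j - 1) * cStep j = c j := by
  rw [cStep, mul_inv_cancel_left]

lemma cStep_two_mul_add_one (k : ℕ) : cStep (2 * k + 1) = (A 2 ^ k)⁻¹ * (A 1 * A 2 ^ k) := by
  rw [cStep, Nat.add_sub_cancel, c_two_mul, c_two_mul_add_one]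

lemma cStep_two_mul_add_two (k : ℕ) :
    cStep (2 * k + 2) = (A 1 * A 2 ^ k)⁻¹ * A 2 ^ (k + 1) := by
  rw [cStep, show 2 * k + 2 = 2 * (k + 1) by ring, show 2 * (k + 1) - 1 = 2 * k + 1 by omega,
    c_two_mul, c_two_mul_add_one]

lemma cStep_one : cStep 1 = A 1 := by
  simpa using cStep_two_mul_add_one 0

lemma act_of_one_cStep (j : ℕ) :
    act (FreeGroup.of 1) (cStep (j + 2)) = cStep (j + 1) := by
  have hA2 : act (FreeGroup.of 1) (A 2) = A 2 := act_of_A_of_ne (by omega)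
  rcases Nat.even_or_odd' j with ⟨k, rfl | rfl⟩
  · rw [cStep_two_mul_add_two, cStep_two_mul_add_one]
    simp only [act_apply_mul, act_apply_inv, act_apply_pow, hA2, act_of_one_A_one]
    group
  · rw [show 2 * k + 1 + 2 = 2 * (k + 1) + 1 by ring, show 2 * k + 1 + 1 = 2 * k + 2 by ring,
      cStep_two_mul_add_one, cStep_two_mul_add_two]
    simp only [act_apply_mul, act_apply_inv, act_apply_pow, hA2, act_of_one_A_one]
    group

lemma act_of_one_pow_cStep (m : ℕ) :
    act (FreeGroup.of 1 ^ (m + 1)) (cStep (m + 1)) = A 2 * (A 1)⁻¹ := by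
  induction m with
  | zero => rw [pow_one, cStep_one, act_of_one_A_one]
  | succ m ih => rw [pow_succ', act_mul, act_of_one_cStep, ih]

lemma act_βw_cStep {n m : ℕ} (hn : 3 ≤ n) (hm : 1 ≤ m) :
    act (βw n m) (cStep m) = A 3 * (A 2)⁻¹ := by
  obtain ⟨m, rfl⟩ : ∃ k, m = k + 1 := ⟨m - 1, by omega⟩
  rw [βw, act_mul, act_of_one_pow_cStep, act_apply_mul, act_apply_inv, act_ρw_A (by omega),
    act_ρw_A (by omega)]
  group

lemma act_βw_c {n m : ℕ} (hn : 3 ≤ n) (hm : 1 ≤ m) :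
    act (βw n m) (c m) = act (βw n m) (c (m - 1)) * (A 3 * (A 2)⁻¹) := by
  rw [← act_βw_cStep hn hm, ← act_apply_mul, c_mul_cStep]

lemma actR_sg (b w : FreeGroup ℕ) : actR b (sg w) = sg (act b w) := by
  simp [actR, sg, act, MonoidAlgebra.of_apply]

lemma sg_mul (x y : FreeGroup ℕ) : sg (x * y) = sg x * sg y :=
  map_mul (MonoidAlgebra.of ℤ (FreeGroup ℕ)) x y

/-- for every positive integer `m`, under the Artin action,
`g_m^{β(m)} = − g_{m-1}^{β(m)} a_3 a_2⁻¹`, where `β(m) = σ_1^m ρ ∈ B_n`. -/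
theorem g_beta_relation (n : ℕ) (hn : 3 ≤ n) (m : ℕ) (hm : 1 ≤ m) :
    actR (βw n m) (g m) = -(actR (βw n m) (g (m - 1)) * sg (A 3 * (A 2)⁻¹)) := by
  obtain ⟨k, rfl⟩ : ∃ k, m = k + 1 := ⟨m - 1, by omega⟩
  have hc := act_βw_c hn hm
  rw [Nat.add_sub_cancel] at hc ⊢
  rw [g, g, map_zsmul, map_zsmul, actR_sg, actR_sg, hc, sg_mul, smul_mul_assoc, pow_succ,
    mul_neg_one, neg_smul]

end Artin
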